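/- arXiv:1004.2305 — 3 statements merged into one kernel-verified Lean document; each statement's English description precedes it below -/
import Mathlib

section
/- For every integer n ≥ 4, the sum ∑ C_{r_1}·C_{r_2}·C_{r_3}·C_{r_4} over all quadruples (r_1,r_2,r_3,r_4) of integers with each r_i ≥ 1 and r_1 + r_2 + r_3 + r_4 = n − 2 equals C_{n+1} − 6·C_n + 10·C_{n−1} − 4·C_{n−2}. -/
/-!
With `c = ∑ Cₙ Xⁿ`, the sum is the coefficient of `X^(n-2)` in `(c - 1)⁴`. The functional
equation `X c² = c - 1` gives `X (c - 1)² = (1 - 2X) c - (1 - X)`; squaring and using it once more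
makes `X³ (c - 1)⁴` linear in `c` with coefficient `1 - 6X + 10X² - 4X³`, up to a cubic
polynomial that does not reach the relevant coefficients.
-/

open PowerSeries Finset

theorem PowerSeries.coeff_pow_eq_sum_antidiagonalTuple {R : Type*} [CommSemiring R]
    (k n : ℕ) (φ : R⟦X⟧) :
    coeff n (φ ^ k) = ∑ r ∈ Nat.antidiagonalTuple k n, ∏ i, coeff (r i) φ := by
  classical
  rw [← Fin.prod_const, coeff_prod]
  refine sum_nbij' (fun l => ⇑l) (fun r => Finsupp.equivFunOnFinite.symm r) ?_ ?_ ?_ ?_ ?_ <;>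
    simp [Nat.mem_antidiagonalTuple]

theorem Finset.sum_filter_forall_pos_prod {ι R : Type*} [Fintype ι] [CommSemiring R]
    [DecidablePred fun r : ι → ℕ => ∀ i, 1 ≤ r i] (s : Finset (ι → ℕ)) (f : ℕ → R) :
    ∑ r ∈ s with ∀ i, 1 ≤ r i, ∏ i, f (r i) = ∑ r ∈ s, ∏ i, if r i = 0 then 0 else f (r i) := by
  rw [sum_filter]
  refine sum_congr rfl fun r _ => ?_
  split_ifs with hpos
  · exact prod_congr rfl fun i _ => (if_neg (Nat.one_le_iff_ne_zero.mp (hpos i))).symm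
  · obtain ⟨i, hi⟩ := not_forall.mp hpos
    have hi0 : r i = 0 := by omega
    exact (prod_eq_zero (mem_univ i) (by simp [hi0])).symm

theorem X_pow_three_mul_sub_one_pow_four {R : Type*} [CommRing R] {x c : R}
    (h : c ^ 2 * x + 1 = c) :
    x ^ 3 * (c - 1) ^ 4 =
      (1 - 6 * x + 10 * x ^ 2 - 4 * x ^ 3) * c - (1 - 5 * x + 6 * x ^ 2 - x ^ 3) := by
  -- `A = (1 - 2x) c - (1 - x)` and `R = x c² - c + 1` satisfy `x (c - 1)² = A + R`
  linear_combination
    (x * (2 * (c * (1 - 2 * x) - (1 - x)) + (x * c ^ 2 - c + 1)) + (1 - 2 * x) ^ 2) * h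

noncomputable abbrev intCatalanSeries : ℤ⟦X⟧ := catalanSeries.map (Nat.castRingHom ℤ)

theorem intCatalanSeries_sq_mul_X_add_one : intCatalanSeries ^ 2 * X + 1 = intCatalanSeries := by
  simpa using congrArg (map (Nat.castRingHom ℤ)) catalanSeries_sq_mul_X_add_one

theorem coeff_intCatalanSeries_sub_one (n : ℕ) :
    coeff n (intCatalanSeries - 1) = if n = 0 then 0 else (catalan n : ℤ) := by
  rw [map_sub, coeff_map, catalanSeries_coeff, coeff_one]
  cases n <;> simp

theorem coeff_intCatalanSeries_sub_one_pow_four {m : ℕ} (hm : m ≠ 0) :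
    coeff m ((intCatalanSeries - 1) ^ 4) =
      (catalan (m + 3) : ℤ) - 6 * catalan (m + 2) + 10 * catalan (m + 1) - 4 * catalan m := by
  have key := congrArg (coeff (m + 3))
    (X_pow_three_mul_sub_one_pow_four intCatalanSeries_sq_mul_X_add_one)
  rw [coeff_X_pow_mul'] at key
  simp only [sub_mul, add_mul, one_mul, mul_assoc, map_sub, map_add, ← map_ofNat (C (R := ℤ)),
    coeff_C_mul, coeff_X_pow_mul', coeff_X_pow, coeff_one, coeff_succ_X_mul, coeff_X] at key
  simpa [hm] using key

/-- For every n ≥ 4, ∑_{r₁+r₂+r₃+r₄=n−2, rᵢ≥1} C_{r₁}C_{r₂}C_{r₃}C_{r₄}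
= C_{n+1} − 6·C_n + 10·C_{n−1} − 4·C_{n−2}. -/
theorem stmt_6 (n : ℕ) (hn : 4 ≤ n) :
    (∑ r ∈ (Finset.Nat.antidiagonalTuple 4 (n - 2)).filter (fun r => ∀ i, 1 ≤ r i),
        ∏ i, (catalan (r i) : ℤ)) =
      (catalan (n + 1) : ℤ) - 6 * catalan n + 10 * catalan (n - 1) - 4 * catalan (n - 2) := by
  obtain ⟨m, rfl⟩ : ∃ m, n = m + 2 := ⟨n - 2, by omega⟩
  rw [sum_filter_forall_pos_prod _ fun k => (catalan k : ℤ)]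
  simp_rw [← coeff_intCatalanSeries_sub_one, ← coeff_pow_eq_sum_antidiagonalTuple]
  rw [Nat.add_sub_cancel, coeff_intCatalanSeries_sub_one_pow_four (by omega)]
  rfl
end

section
/- For every m ≥ 2 there exist real constants c_1, c_2 > 0 such that for all integers n ≥ 2m−2, c_1·C_{n−m+2} ≤ F(n,m) ≤ c_2·C_{n−m+2}, where F(n,m) = ∑ C_{r_1}·…·C_{r_m}, the sum being over all m-tuples (r_1,…,r_m) of integers with each r_i ≥ 1 and r_1+⋯+r_m = n−m+2. -/
/-!
Every term of `F(n, m)` is a product of Catalan numbers with indices summing to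
`N = n - m + 2`. The tuple `(N - m + 1, 1, …, 1)` alone gives `F(n, m) ≥ C_{N-m+1}`, while
the sum of all such products over tuples with entries `≥ 0` is the coefficient of `x^N` in
`c(x)^m`, which the Catalan recurrence bounds by `C_{N+m-1}`. Since `C_{j+1} ≤ 4 C_j`,
both bounds are within a factor `4^(m-1)` of `C_N`.
-/

open Finset

theorem Finset.Nat.sum_antidiagonalTuple_succ {M : Type*} [AddCommMonoid M] (k n : ℕ)
    (f : (Fin (k + 1) → ℕ) → M) :
    ∑ r ∈ Nat.antidiagonalTuple (k + 1) n, f r =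
      ∑ ab ∈ antidiagonal n, ∑ x ∈ Nat.antidiagonalTuple k ab.2, f (Fin.cons ab.1 x) := by
  rw [sum_sigma']
  refine sum_nbij' (fun r => ⟨(r 0, ∑ i, Fin.tail r i), Fin.tail r⟩)
    (fun p => Fin.cons p.1.1 p.2) ?_ ?_ ?_ ?_ ?_
  · intro r hr
    rw [Nat.mem_antidiagonalTuple, Fin.sum_univ_succ] at hr
    simpa [Nat.mem_antidiagonalTuple, Fin.tail] using hr
  · rintro ⟨⟨a, b⟩, x⟩ hp
    simp_all [Nat.mem_antidiagonalTuple, Fin.sum_cons]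
  · intro r _
    exact Fin.cons_self_tail r
  · rintro ⟨⟨a, b⟩, x⟩ hp
    simp_all [Nat.mem_antidiagonalTuple]
  · intro r _
    rw [Fin.cons_self_tail]

theorem add_two_mul_catalan_succ (n : ℕ) :
    (n + 2) * catalan (n + 1) = 2 * (2 * n + 1) * catalan n := by
  refine Nat.eq_of_mul_eq_mul_left n.succ_pos ?_
  calc (n + 1) * ((n + 2) * catalan (n + 1))
      = (n + 1) * (n + 1).centralBinom := by rw [← succ_mul_catalan_eq_centralBinom]
    _ = 2 * (2 * n + 1) * n.centralBinom := Nat.succ_mul_centralBinom_succ n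
    _ = (n + 1) * (2 * (2 * n + 1) * catalan n) := by
      rw [← succ_mul_catalan_eq_centralBinom]; ring

theorem catalan_succ_le_four_mul (n : ℕ) : catalan (n + 1) ≤ 4 * catalan n := by
  refine Nat.le_of_mul_le_mul_left ?_ (show 0 < n + 2 by omega)
  calc (n + 2) * catalan (n + 1) = 2 * (2 * n + 1) * catalan n := add_two_mul_catalan_succ n
    _ ≤ (n + 2) * (4 * catalan n) := by nlinarith

theorem catalan_add_le_four_pow_mul (a k : ℕ) : catalan (a + k) ≤ 4 ^ k * catalan a := by
  induction k with
  | zero => simp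
  | succ k ih =>
    calc catalan (a + k + 1) ≤ 4 * catalan (a + k) := catalan_succ_le_four_mul _
      _ ≤ 4 * (4 ^ k * catalan a) := Nat.mul_le_mul_left _ ih
      _ = 4 ^ (k + 1) * catalan a := by ring

theorem sum_antidiagonal_catalan_mul_catalan_add_le (N k : ℕ) :
    ∑ ij ∈ antidiagonal N, catalan ij.1 * catalan (ij.2 + k) ≤ catalan (N + k + 1) := by
  rw [catalan_succ',
    Nat.sum_antidiagonal_eq_sum_range_succ (fun i j => catalan i * catalan (j + k)),
    Nat.sum_antidiagonal_eq_sum_range_succ (fun i j => catalan i * catalan j)]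
  calc ∑ i ∈ range (N + 1), catalan i * catalan (N - i + k)
      = ∑ i ∈ range (N + 1), catalan i * catalan (N + k - i) :=
        sum_congr rfl fun i hi => by rw [mem_range] at hi; congr 2; omega
    _ ≤ ∑ i ∈ range (N + k + 1), catalan i * catalan (N + k - i) :=
        sum_le_sum_of_subset (range_subset_range.mpr (by omega))

def catalanConv (k N : ℕ) : ℕ :=
  ∑ r ∈ Nat.antidiagonalTuple k N, ∏ i, catalan (r i)

theorem catalanConv_one (N : ℕ) : catalanConv 1 N = catalan N := by
  simp [catalanConv, Nat.antidiagonalTuple_one]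

theorem catalanConv_succ (k N : ℕ) :
    catalanConv (k + 1) N = ∑ ab ∈ antidiagonal N, catalan ab.1 * catalanConv k ab.2 := by
  rw [catalanConv, Nat.sum_antidiagonalTuple_succ]
  refine sum_congr rfl fun ab _ => ?_
  rw [catalanConv, mul_sum]
  refine sum_congr rfl fun x _ => ?_
  simp [Fin.prod_univ_succ]

theorem catalanConv_succ_le (k N : ℕ) : catalanConv (k + 1) N ≤ catalan (N + k) := by
  induction k generalizing N with
  | zero => rw [catalanConv_one, add_zero]
  | succ k ih =>
    calc catalanConv (k + 1 + 1) N
        = ∑ ab ∈ antidiagonal N, catalan ab.1 * catalanConv (k + 1) ab.2 := catalanConv_succ _ _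
      _ ≤ ∑ ab ∈ antidiagonal N, catalan ab.1 * catalan (ab.2 + k) :=
        sum_le_sum fun ab _ => Nat.mul_le_mul_left _ (ih ab.2)
      _ ≤ catalan (N + (k + 1)) := sum_antidiagonal_catalan_mul_catalan_add_le N k

def Fcount (n m : ℕ) : ℕ :=
  ∑ r ∈ (Finset.Nat.antidiagonalTuple m (n - m + 2)).filter (fun r => ∀ i, 1 ≤ r i),
    ∏ i, catalan (r i)

theorem Fcount_le_catalanConv (n m : ℕ) : Fcount n m ≤ catalanConv m (n - m + 2) :=
  sum_le_sum_of_subset (filter_subset _ _)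

theorem Fcount_le_four_pow_mul_catalan (n k : ℕ) :
    Fcount n (k + 1) ≤ 4 ^ k * catalan (n - (k + 1) + 2) :=
  calc Fcount n (k + 1) ≤ catalanConv (k + 1) (n - (k + 1) + 2) := Fcount_le_catalanConv n _
    _ ≤ catalan (n - (k + 1) + 2 + k) := catalanConv_succ_le k _
    _ ≤ 4 ^ k * catalan (n - (k + 1) + 2) := catalan_add_le_four_pow_mul _ k

theorem catalan_le_Fcount {n k a : ℕ} (ha : 1 ≤ a) (hsum : a + k = n - (k + 1) + 2) :
    catalan a ≤ Fcount n (k + 1) := by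
  let r : Fin (k + 1) → ℕ := Fin.cons a fun _ => 1
  have hr : r ∈ (Nat.antidiagonalTuple (k + 1) (n - (k + 1) + 2)).filter
      (fun r => ∀ i, 1 ≤ r i) := by
    simp only [mem_filter, Nat.mem_antidiagonalTuple, r, Fin.sum_cons]
    refine ⟨by simpa using hsum, Fin.cases ha fun _ => le_rfl⟩
  calc catalan a = ∏ i, catalan (r i) := by simp [r, Fin.prod_univ_succ, catalan_one]
    _ ≤ Fcount n (k + 1) :=
      single_le_sum (f := fun r => ∏ i, catalan (r i)) (fun _ _ => Nat.zero_le _) hr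

theorem catalan_le_four_pow_mul_Fcount {n k : ℕ} (hn : 2 * k ≤ n) :
    catalan (n - (k + 1) + 2) ≤ 4 ^ k * Fcount n (k + 1) := by
  set N := n - (k + 1) + 2
  calc catalan N = catalan (N - k + k) := by congr 1; omega
    _ ≤ 4 ^ k * catalan (N - k) := catalan_add_le_four_pow_mul _ k
    _ ≤ 4 ^ k * Fcount n (k + 1) :=
      Nat.mul_le_mul_left _ (catalan_le_Fcount (by omega) (by omega))

/-- For every m ≥ 2 there are constants c₁, c₂ > 0 with
c₁·C_{n−m+2} ≤ F(n,m) ≤ c₂·C_{n−m+2} for all n ≥ 2m−2. -/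
theorem stmt_9 (m : ℕ) (hm : 2 ≤ m) :
    ∃ c₁ c₂ : ℝ, 0 < c₁ ∧ 0 < c₂ ∧ ∀ n : ℕ, 2 * m - 2 ≤ n →
      c₁ * (catalan (n - m + 2) : ℝ) ≤ (Fcount n m : ℝ) ∧
        (Fcount n m : ℝ) ≤ c₂ * (catalan (n - m + 2) : ℝ) := by
  obtain ⟨k, rfl⟩ : ∃ k, m = k + 1 := ⟨m - 1, by omega⟩
  refine ⟨(4 ^ k)⁻¹, 4 ^ k, by positivity, by positivity, fun n hn => ⟨?_, ?_⟩⟩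
  · rw [inv_mul_le_iff₀ (by positivity)]
    exact_mod_cast catalan_le_four_pow_mul_Fcount (by omega)
  · exact_mod_cast Fcount_le_four_pow_mul_catalan n k
end

section
/- For every m ≥ 2, setting ⌊m⌋ := ⌊(m−1)/2⌋ + 2, there exist positive integers a_1, a_2, …, a_{⌊m⌋} (depending on m but not on n) such that for all integers n ≥ m, T(n,m) = ∑_{l=1}^{⌊m⌋} (−1)^{l−1}·a_l·C_{n+2−l}. -/
/-!
Let `c = ∑ Cₙ Xⁿ`, so that `c = 1 + X c²`. Forcing an entry of a tuple to be positive replaces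
its factor `c` by `c - 1 = X c²`; hence `T(n,m)` is the coefficient of `X^(n-m)` in `c^(m+2)`.
The relation `X c^(k+2) = c^(k+1) - c^k` makes `X^(k+1) c^(k+2)` obey the same two-term
recursion as the polynomials `Fₖ = ∑ₗ (-1)ˡ C(k-l, l) Xˡ`,
whence `X^(k+1) c^(k+2) = F_(k+1) c - Fₖ`.
Since `deg Fₖ ≤ k`, the coefficient of `X^(n+1)` gives `T(n,m) = ∑ₗ (-1)ˡ C(m+1-l, l) C_(n+1-l)`,
and `C(m+1-l, l) > 0` exactly for `l ≤ (m+1)/2`.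
-/

/-- `T n m` = ∑ C_{r₁}⋯C_{r_m} over m-tuples of nonnegative integers with r₁ ≥ 1, r_m ≥ 1
and r₁+⋯+r_m = n−m+2. -/
def Tcount (n m : ℕ) : ℕ :=
  ∑ r ∈ (Finset.Nat.antidiagonalTuple m (n - m + 2)).filter
      (fun r => ∀ i : Fin m, ((i : ℕ) = 0 ∨ (i : ℕ) = m - 1) → 1 ≤ r i),
    ∏ i, catalan (r i)

open Finset PowerSeries

theorem Nat.choose_add_one_sub_add_one (k l : ℕ) :
    (k + 1 - l).choose (l + 1) = (k - l).choose (l + 1) + (k - l).choose l := by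
  rcases le_or_gt l k with h | h
  · rw [Nat.sub_add_comm h, Nat.choose_succ_succ', add_comm]
  · obtain ⟨l, rfl⟩ := Nat.exists_eq_add_one_of_ne_zero (Nat.ne_zero_of_lt h)
    simp [Nat.sub_eq_zero_of_le h.le, Nat.sub_eq_zero_of_le h]

namespace PowerSeries

variable {R : Type*}

theorem coeff_prod_fin [CommSemiring R] {k : ℕ} (f : Fin k → R⟦X⟧) (d : ℕ) :
    coeff d (∏ i, f i) = ∑ r ∈ Nat.antidiagonalTuple k d, ∏ i, coeff (r i) (f i) := by
  rw [coeff_prod, finsuppAntidiag, sum_map, ← piAntidiag_univ_fin_eq_antidiagonalTuple,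
    ← sum_attach (piAntidiag univ d)]
  rfl

theorem coeff_X_mul_catalanSeries_sq (n : ℕ) :
    coeff n (X * catalanSeries ^ 2) = if n = 0 then 0 else catalan n := by
  conv_rhs => rw [← catalanSeries_coeff, ← catalanSeries_sq_mul_X_add_one]
  cases n <;> simp [mul_comm X, coeff_one]

theorem sum_filter_pos_prod_catalan {m : ℕ} (P : Fin m → Prop) [DecidablePred P] (d : ℕ) :
    ∑ r ∈ (Nat.antidiagonalTuple m d).filter (fun r => ∀ i, P i → 0 < r i), ∏ i, catalan (r i) =
      coeff d (X ^ #{i | P i} * catalanSeries ^ (m + #{i | P i})) := by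
  have hprod : X ^ #{i | P i} * catalanSeries ^ (m + #{i | P i}) =
      ∏ i, if P i then X * catalanSeries ^ 2 else catalanSeries := by
    have hle : #{i | P i} ≤ m := (card_filter_le _ _).trans_eq (card_fin m)
    rw [prod_ite, prod_const, prod_const, mul_pow, ← pow_mul, filter_not, card_univ_sdiff,
      Fintype.card_fin, show m + #{i | P i} = 2 * #{i | P i} + (m - #{i | P i}) by omega, pow_add]
    ring
  rw [hprod, coeff_prod_fin, sum_filter]
  refine sum_congr rfl fun r _ => ?_
  simp_rw [apply_ite (coeff _), coeff_X_mul_catalanSeries_sq, catalanSeries_coeff]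
  split_ifs with h
  · refine prod_congr rfl fun i _ => ?_
    split_ifs with hPi hri
    · exact absurd (h i hPi) (by omega)
    all_goals rfl
  · push Not at h
    obtain ⟨i, hPi, hri⟩ := h
    refine (Finset.prod_eq_zero (mem_univ i) ?_).symm
    simp [hPi, Nat.le_zero.mp hri]

variable (R) in
def fibSeries [CommRing R] (k : ℕ) : R⟦X⟧ := mk fun l => (-1) ^ l * ((k - l).choose l : R)

variable [CommRing R]

theorem fibSeries_zero : fibSeries R 0 = 1 := by
  ext (_ | _) <;> simp [fibSeries, coeff_one]

theorem fibSeries_one : fibSeries R 1 = 1 := by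
  ext (_ | _ | _) <;> simp [fibSeries, coeff_one]

theorem fibSeries_add_two (k : ℕ) :
    fibSeries R (k + 2) = fibSeries R (k + 1) - X * fibSeries R k := by
  ext (_ | l)
  · simp [fibSeries]
  · simp only [fibSeries, map_sub, coeff_mk, coeff_succ_X_mul, pow_succ]
    rw [show k + 2 - (l + 1) = k + 1 - l by omega, show k + 1 - (l + 1) = k - l by omega,
      Nat.choose_add_one_sub_add_one]
    push_cast
    ring

theorem X_pow_mul_pow_eq_fibSeries {f : R⟦X⟧} (hf : f ^ 2 * X + 1 = f) (k : ℕ) :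
    X ^ (k + 1) * f ^ (k + 2) = fibSeries R (k + 1) * f - fibSeries R k := by
  induction k using Nat.twoStepInduction with
  | zero => rw [fibSeries_one, fibSeries_zero]; linear_combination hf
  | one =>
    rw [fibSeries_add_two, fibSeries_one, fibSeries_zero]
    linear_combination (1 + X * f) * hf
  | more k IH1 IH2 =>
    linear_combination X ^ (k + 2) * f ^ (k + 2) * hf + IH2 - X * IH1 -
      f * fibSeries_add_two (R := R) (k + 1) + fibSeries_add_two (R := R) k

theorem coeff_pow_eq_sum_choose {f : R⟦X⟧} (hf : f ^ 2 * X + 1 = f) (k N : ℕ) :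
    coeff N (f ^ (k + 2)) = ∑ l ∈ range (N + k + 2),
      (-1) ^ l * ((k + 1 - l).choose l : R) * coeff (N + k + 1 - l) f := by
  have hlow : coeff (N + (k + 1)) (fibSeries R k) = 0 := by
    simp [fibSeries, Nat.choose_eq_zero_of_lt (show k - (N + (k + 1)) < N + (k + 1) by omega)]
  rw [← coeff_X_pow_mul _ (k + 1), X_pow_mul_pow_eq_fibSeries hf, map_sub, hlow, sub_zero,
    coeff_mul,
    Nat.sum_antidiagonal_eq_sum_range_succ (fun i j => coeff i (fibSeries R (k + 1)) * coeff j f)]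
  simp [fibSeries, ← add_assoc]

end PowerSeries

theorem Tcount_eq_coeff_catalanSeries_pow {m : ℕ} (hm : 2 ≤ m) (n : ℕ) :
    Tcount n m = coeff (n - m) (catalanSeries ^ (m + 2)) := by
  have hends : #{i : Fin m | (i : ℕ) = 0 ∨ (i : ℕ) = m - 1} = 2 := by
    rw [card_eq_two]
    refine ⟨⟨0, by omega⟩, ⟨m - 1, by omega⟩, by simp [Fin.ext_iff]; omega, ?_⟩
    ext i
    simp [Fin.ext_iff]
  refine (sum_filter_pos_prod_catalan (fun i : Fin m => (i : ℕ) = 0 ∨ (i : ℕ) = m - 1) _).trans ?_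
  rw [hends, coeff_X_pow_mul]

/-- For every m ≥ 2, with ⌊m⌋ := ⌊(m−1)/2⌋ + 2, there exist positive integers
a₁, …, a_{⌊m⌋} such that for all n ≥ m,
T(n,m) = ∑_{l=1}^{⌊m⌋} (−1)^{l−1}·a_l·C_{n+2−l}.
(Below the coordinate `l : Fin ⌊m⌋` is a_{l+1} of the paper, and C_{n+2−(l+1)} = C_{n+1−l}.) -/
theorem stmt_14 (m : ℕ) (hm : 2 ≤ m) :
    ∃ a : Fin ((m - 1) / 2 + 2) → ℤ, (∀ l, 0 < a l) ∧
      ∀ n : ℕ, m ≤ n →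
        (Tcount n m : ℤ) =
          ∑ l : Fin ((m - 1) / 2 + 2), (-1 : ℤ) ^ (l : ℕ) * a l * catalan (n + 1 - (l : ℕ)) := by
  have hc : (catalanSeries.map (Nat.castRingHom ℤ)) ^ 2 * X + 1 =
      catalanSeries.map (Nat.castRingHom ℤ) := by
    simpa using congrArg (map (Nat.castRingHom ℤ)) catalanSeries_sq_mul_X_add_one
  refine ⟨fun l => ((m + 1 - l).choose l : ℤ), fun l => ?_, fun n hn => ?_⟩
  · exact Nat.cast_pos.mpr (Nat.choose_pos (by omega))
  have hT : (Tcount n m : ℤ) =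
      coeff (n - m) ((catalanSeries.map (Nat.castRingHom ℤ)) ^ (m + 2)) := by
    rw [Tcount_eq_coeff_catalanSeries_pow hm, ← map_pow, coeff_map]
    rfl
  rw [hT, coeff_pow_eq_sum_choose hc, show n - m + m = n by omega, Fin.sum_univ_eq_sum_range
    (fun l => (-1) ^ l * ((m + 1 - l).choose l : ℤ) * catalan (n + 1 - l))]
  simp only [coeff_map, catalanSeries_coeff, eq_natCast]
  refine (sum_subset (range_subset_range.2 (by omega)) fun l _ hl => ?_).symm
  rw [Nat.choose_eq_zero_of_lt (by simp at hl; omega)]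
  simp
end
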